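/- Let p ≥ q ≥ 2 be integers with p ≥ q² and n > 2p, and let L be the equation px + qy = z. Then the number of maximal L-free subsets of [n] is at least 2^ℓ where ℓ = (n(q−1) − pq + q − 2q²)/q². -/

import Mathlib

/-!
Put `Y = (n/q², (n-p)/q] \ {p+q}`. For `T ⊆ Y` the set `{1} ∪ {p + q y : y ∈ T} ∪ (Y \ T)` lies in
`[n]` and is `L`-free: its elements other than `1` exceed `n/q² ≥ n/p`, so `x = 1`, and then
`z = p + q y` is beyond `n` if `y = p + q w`, is `p + q ∉ Y` if `y = 1`, and is not in the set if
`y ∈ Y \ T` (since `p + q Y` misses `Y`). If `y ∈ T₁ \ T₂`, then `1`, `y`, `p + q y` solve `L` in the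
union of the sets attached to `T₁` and `T₂`, so maximal extensions of these `2^|Y|` sets are
pairwise distinct; finally `|Y| ≥ ⌊(n-p)/q⌋ - ⌊n/q²⌋ - 1 ≥ ℓ`.
-/

open Finset

def LFree (p q : ℕ) (S : Finset ℕ) : Prop :=
  ¬ ∃ x ∈ S, ∃ y ∈ S, ∃ z ∈ S, p * x + q * y = z

theorem card_le_ncard_maximal {α ι : Type*} [DecidableEq α] (U : Finset α) (P : Finset α → Prop)
    (I : Finset ι) (S : ι → Finset α) (hSU : ∀ i ∈ I, S i ⊆ U) (hSP : ∀ i ∈ I, P (S i))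
    (hS : ∀ i ∈ I, ∀ j ∈ I, i ≠ j → ∀ M, S i ∪ S j ⊆ M → ¬ P M) :
    #I ≤ {M | M ⊆ U ∧ P M ∧ ∀ M', M' ⊆ U → P M' → M ⊆ M' → M' = M}.ncard := by
  set F : Set (Finset α) := {M | M ⊆ U ∧ P M}
  have hF : F.Finite := U.powerset.finite_toSet.subset fun M hM => mem_powerset.2 hM.1
  have hmax : ∀ i, ∃ M, i ∈ I → S i ⊆ M ∧ Maximal (· ∈ F) M := by
    intro i
    by_cases hi : i ∈ I
    · obtain ⟨M, hSM, hM⟩ := hF.exists_le_maximal ⟨hSU i hi, hSP i hi⟩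
      exact ⟨M, fun _ => ⟨hSM, hM⟩⟩
    · exact ⟨∅, fun h => absurd h hi⟩
  choose M hM using hmax
  rw [← Set.ncard_coe_finset]
  refine Set.ncard_le_ncard_of_injOn M (fun i hi => ?_) (fun i hi j hj hij => ?_) ?_
  · obtain ⟨-, ⟨hMU, hMP⟩, hMmax⟩ := hM i hi
    exact ⟨hMU, hMP, fun M' hM'U hM'P hle => le_antisymm (hMmax ⟨hM'U, hM'P⟩ hle) hle⟩
  · by_contra hne
    exact hS i hi j hj hne (M i) (union_subset (hM i hi).1 (hij ▸ (hM j hj).1)) (hM i hi).2.1.2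
  · exact hF.subset fun M hM => ⟨hM.1, hM.2.1⟩

namespace LFree

variable {p q n : ℕ}

def window (p q n : ℕ) : Finset ℕ := Ioc (n / q ^ 2) ((n - p) / q)

theorem pos_of_mem_window {y : ℕ} (hy : y ∈ window p q n) : 0 < y :=
  (Nat.zero_le _).trans_lt (mem_Ioc.1 hy).1

theorem lt_sq_mul_of_mem_window (hq : 0 < q) {y : ℕ} (hy : y ∈ window p q n) : n < q ^ 2 * y := by
  rw [mul_comm]
  exact (Nat.div_lt_iff_lt_mul (by positivity)).1 (mem_Ioc.1 hy).1

theorem add_mul_le_of_mem_window (hq : 0 < q) {y : ℕ} (hy : y ∈ window p q n) :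
    p + q * y ≤ n := by
  have hle : y * q ≤ n - p := (Nat.le_div_iff_mul_le hq).1 (mem_Ioc.1 hy).2
  have hpos : 0 < y * q := Nat.mul_pos (pos_of_mem_window hy) hq
  rw [mul_comm]
  omega

theorem add_mul_notMem_window (hq : 0 < q) {y : ℕ} (hy : y ∈ window p q n) :
    p + q * y ∉ window p q n := by
  intro hz
  have h1 := lt_sq_mul_of_mem_window hq hy
  have h2 := add_mul_le_of_mem_window hq hz
  nlinarith

theorem one_lt_of_mem_window (hq : 0 < q) (hp : q ^ 2 ≤ p) {y : ℕ} (hy : y ∈ window p q n) :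
    1 < y := by
  have h1 := lt_sq_mul_of_mem_window hq hy
  have h2 := add_mul_le_of_mem_window hq hy
  by_contra! h
  interval_cases y <;> nlinarith

def baseSet (p q : ℕ) (Y T : Finset ℕ) : Finset ℕ :=
  insert 1 (T.image (p + q * ·) ∪ (Y \ T))

theorem mem_baseSet {Y T : Finset ℕ} {s : ℕ} :
    s ∈ baseSet p q Y T ↔ s = 1 ∨ (∃ w ∈ T, p + q * w = s) ∨ (s ∈ Y ∧ s ∉ T) := by
  simp [baseSet]

variable {Y T : Finset ℕ}

theorem baseSet_subset_Icc (hq : 0 < q) (hn : 1 ≤ n) (hY : Y ⊆ window p q n) (hT : T ⊆ Y) :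
    baseSet p q Y T ⊆ Icc 1 n := by
  intro s hs
  rw [mem_Icc]
  rcases mem_baseSet.1 hs with rfl | ⟨w, hw, rfl⟩ | ⟨hsY, -⟩
  · exact ⟨le_rfl, hn⟩
  · have := add_mul_le_of_mem_window hq (hY (hT hw))
    have := pos_of_mem_window (hY (hT hw))
    constructor <;> nlinarith
  · have := add_mul_le_of_mem_window hq (hY hsY)
    have := pos_of_mem_window (hY hsY)
    constructor <;> nlinarith

theorem lFree_baseSet (hq : 0 < q) (hp : q ^ 2 ≤ p) (hn : 1 ≤ n)
    (hY : Y ⊆ (window p q n).erase (p + q)) (hT : T ⊆ Y) : LFree p q (baseSet p q Y T) := by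
  have hW : Y ⊆ window p q n := hY.trans (erase_subset _ _)
  have hle : ∀ s ∈ baseSet p q Y T, s ≤ n := fun s hs =>
    (mem_Icc.1 (baseSet_subset_Icc hq hn hW hT hs)).2
  have hlarge : ∀ s ∈ baseSet p q Y T, s ≠ 1 → n < q ^ 2 * s := by
    intro s hs hs1
    rcases mem_baseSet.1 hs with rfl | ⟨w, hw, rfl⟩ | ⟨hsY, -⟩
    · exact absurd rfl hs1
    · have := lt_sq_mul_of_mem_window hq (hW (hT hw))
      nlinarith
    · exact lt_sq_mul_of_mem_window hq (hW hsY)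
  rintro ⟨x, hx, y, hy, z, hz, rfl⟩
  obtain rfl | hx1 := eq_or_ne x 1
  swap
  · have := hlarge x hx hx1
    nlinarith [hle _ hz]
  rcases mem_baseSet.1 hy with rfl | ⟨v, hv, rfl⟩ | ⟨hyY, hyT⟩
  · rcases mem_baseSet.1 hz with h | ⟨w, hw, h⟩ | ⟨hzY, -⟩
    · nlinarith
    · have := one_lt_of_mem_window hq hp (hW (hT hw))
      nlinarith
    · exact (mem_erase.1 (hY hzY)).1 (by ring)
  · have := lt_sq_mul_of_mem_window hq (hW (hT hv))
    nlinarith [hle _ hz]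
  · rcases mem_baseSet.1 hz with h | ⟨w, hw, h⟩ | ⟨hzY, -⟩
    · have := pos_of_mem_window (hW hyY)
      nlinarith
    · obtain rfl : w = y := Nat.eq_of_mul_eq_mul_left hq (by omega)
      exact hyT hw
    · exact add_mul_notMem_window hq (hW hyY) (by simpa using hW hzY)

theorem not_lFree_of_mem_of_notMem {T₁ T₂ M : Finset ℕ} (hT₁ : T₁ ⊆ Y) {y : ℕ} (hy₁ : y ∈ T₁)
    (hy₂ : y ∉ T₂) (hM : baseSet p q Y T₁ ∪ baseSet p q Y T₂ ⊆ M) : ¬ LFree p q M := fun h =>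
  h ⟨1, hM (mem_union_left _ (mem_baseSet.2 (Or.inl rfl))),
    y, hM (mem_union_right _ (mem_baseSet.2 (Or.inr (Or.inr ⟨hT₁ hy₁, hy₂⟩)))),
    p + q * y, hM (mem_union_left _ (mem_baseSet.2 (Or.inr (Or.inl ⟨y, hy₁, rfl⟩)))), by ring⟩

theorem not_lFree_of_baseSet_union_subset {T₁ T₂ M : Finset ℕ} (hT₁ : T₁ ⊆ Y) (hT₂ : T₂ ⊆ Y)
    (hne : T₁ ≠ T₂) (hM : baseSet p q Y T₁ ∪ baseSet p q Y T₂ ⊆ M) : ¬ LFree p q M := by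
  obtain h | h := not_and_or.1 (mt (fun h => subset_antisymm h.1 h.2) hne)
  · obtain ⟨y, hy₁, hy₂⟩ := not_subset.1 h
    exact not_lFree_of_mem_of_notMem hT₁ hy₁ hy₂ hM
  · obtain ⟨y, hy₂, hy₁⟩ := not_subset.1 h
    exact not_lFree_of_mem_of_notMem hT₂ hy₂ hy₁ (union_comm (baseSet p q Y T₁) _ ▸ hM)

theorem exponent_le_card_window_erase (hq : 0 < q) :
    ((n : ℝ) * ((q : ℝ) - 1) - (p : ℝ) * q + q - 2 * (q : ℝ) ^ 2) / (q : ℝ) ^ 2 ≤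
      #((window p q n).erase (p + q)) := by
  set A := n / q ^ 2
  set B := (n - p) / q
  have hB : (n : ℝ) + 1 ≤ q * B + q + p := by
    have h₁ : q * B + (n - p) % q = n - p := Nat.div_add_mod (n - p) q
    have h₂ := Nat.mod_lt (n - p) hq
    exact_mod_cast (show n + 1 ≤ q * B + q + p by omega)
  have hA : (A : ℝ) * q ^ 2 ≤ n := by exact_mod_cast Nat.div_mul_le_self n (q ^ 2)
  have hcard : (B : ℝ) ≤ #((window p q n).erase (p + q)) + A + 1 := by
    have h₁ := pred_card_le_card_erase (s := window p q n) (a := p + q)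
    have h₂ : #(window p q n) = B - A := Nat.card_Ioc _ _
    exact_mod_cast (show B ≤ #((window p q n).erase (p + q)) + A + 1 by omega)
  have hqR : (0 : ℝ) < q := by exact_mod_cast hq
  rw [div_le_iff₀ (by positivity)]
  nlinarith [mul_le_mul_of_nonneg_left hcard (sq_nonneg (q : ℝ))]

end LFree

theorem stmt15_general (p q n : ℕ) (hq : 2 ≤ q) (hp : q ^ 2 ≤ p)
    (hn : 2 * p < n) :
    (2 : ℝ) ^ (((n : ℝ) * ((q : ℝ) - 1) - (p : ℝ) * q + q - 2 * (q : ℝ) ^ 2) /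
        (q : ℝ) ^ 2) ≤
      ({T : Finset ℕ | T ⊆ Finset.Icc 1 n ∧
          (¬ ∃ x ∈ T, ∃ y ∈ T, ∃ z ∈ T, p * x + q * y = z) ∧
          ∀ T' : Finset ℕ, T' ⊆ Finset.Icc 1 n →
            (¬ ∃ x ∈ T', ∃ y ∈ T', ∃ z ∈ T', p * x + q * y = z) →
            T ⊆ T' → T' = T}.ncard : ℝ) := by
  have hq₀ : 0 < q := by omega
  have hn₁ : 1 ≤ n := by omega
  set Y := (LFree.window p q n).erase (p + q)
  have hcount : 2 ^ #Y ≤ {T : Finset ℕ | T ⊆ Icc 1 n ∧ LFree p q T ∧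
      ∀ T', T' ⊆ Icc 1 n → LFree p q T' → T ⊆ T' → T' = T}.ncard := by
    rw [← card_powerset]
    exact card_le_ncard_maximal _ _ _ (LFree.baseSet p q Y)
      (fun T hT => LFree.baseSet_subset_Icc hq₀ hn₁ (erase_subset _ _) (mem_powerset.1 hT))
      (fun T hT => LFree.lFree_baseSet hq₀ hp hn₁ subset_rfl (mem_powerset.1 hT))
      (fun T₁ hT₁ T₂ hT₂ hne _ => LFree.not_lFree_of_baseSet_union_subset (mem_powerset.1 hT₁)
        (mem_powerset.1 hT₂) hne)
  calc _ ≤ (2 : ℝ) ^ (#Y : ℝ) := Real.rpow_le_rpow_of_exponent_le one_le_two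
        (LFree.exponent_le_card_window_erase hq₀)
    _ ≤ _ := by exact_mod_cast hcount

theorem stmt15 (p q n : ℕ) (hq : 2 ≤ q) (hpq : q ≤ p) (hp : q ^ 2 ≤ p)
    (hn : 2 * p < n) :
    (2 : ℝ) ^ (((n : ℝ) * ((q : ℝ) - 1) - (p : ℝ) * q + q - 2 * (q : ℝ) ^ 2) /
        (q : ℝ) ^ 2) ≤
      ({T : Finset ℕ | T ⊆ Finset.Icc 1 n ∧
          (¬ ∃ x ∈ T, ∃ y ∈ T, ∃ z ∈ T, p * x + q * y = z) ∧
          ∀ T' : Finset ℕ, T' ⊆ Finset.Icc 1 n →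
            (¬ ∃ x ∈ T', ∃ y ∈ T', ∃ z ∈ T', p * x + q * y = z) →
            T ⊆ T' → T' = T}.ncard : ℝ) :=
  stmt15_general p q n hq hp hn
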